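/- arXiv:math/0508275 — 4 statements merged into one kernel-verified Lean document; each statement's English description precedes it below -/
import Mathlib

section
/- Suppose ψ and ψ̂ are nontrivial sub-root functions with fixed points r* and r̂* respectively. If for some 0 ≤ α ≤ 1 one has α·ψ̂(r*) ≤ ψ(r*) ≤ ψ̂(r*), then α²·r̂* ≤ r* ≤ r̂*. -/
open MeasureTheory ProbabilityTheory Set

noncomputable def Pmean {𝒳 : Type*} [MeasurableSpace 𝒳] (P : Measure 𝒳) (f : 𝒳 → ℝ) : ℝ :=
  ∫ z, f z ∂P

noncomputable def Pemp {𝒳 : Type*} {n : ℕ} (Xv : Fin n → 𝒳) (f : 𝒳 → ℝ) : ℝ :=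
  (∑ i, f (Xv i)) / n

noncomputable def PVar {𝒳 : Type*} [MeasurableSpace 𝒳] (P : Measure 𝒳) (f : 𝒳 → ℝ) : ℝ :=
  ∫ z, (f z - Pmean P f) ^ 2 ∂P

noncomputable def RadSup {𝒳 : Type*} {n : ℕ} (σv : Fin n → ℝ) (Xv : Fin n → 𝒳)
    (𝒢 : Set (𝒳 → ℝ)) : ℝ :=
  ⨆ g : 𝒢, (∑ i, σv i * g.1 (Xv i)) / n

noncomputable def ESigmaRad {𝒳 Ωσ : Type*} [MeasurableSpace Ωσ] (μσ : Measure Ωσ)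
    {n : ℕ} (Xv : Fin n → 𝒳) (σ : Fin n → Ωσ → ℝ) (𝒢 : Set (𝒳 → ℝ)) : ℝ :=
  ∫ ωσ, RadSup (fun i => σ i ωσ) Xv 𝒢 ∂μσ

noncomputable def ERad {𝒳 Ωx Ωσ : Type*} [MeasurableSpace Ωx] [MeasurableSpace Ωσ]
    (μx : Measure Ωx) (μσ : Measure Ωσ) {n : ℕ}
    (X : Fin n → Ωx → 𝒳) (σ : Fin n → Ωσ → ℝ) (𝒢 : Set (𝒳 → ℝ)) : ℝ :=
  ∫ ω : Ωx × Ωσ, RadSup (fun i => σ i ω.2) (fun i => X i ω.1) 𝒢 ∂(μx.prod μσ)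

noncomputable def radLaw : Measure ℝ :=
  (1/2 : ENNReal) • Measure.dirac (1 : ℝ) + (1/2 : ENNReal) • Measure.dirac (-1 : ℝ)

def SubRoot (ψ : ℝ → ℝ) : Prop :=
  (∀ r, 0 ≤ r → 0 ≤ ψ r) ∧ (∀ r s, 0 ≤ r → r ≤ s → ψ r ≤ ψ s) ∧
  (∀ r s, 0 < r → r ≤ s → ψ s / Real.sqrt s ≤ ψ r / Real.sqrt r)

def starHull {𝒳 : Type*} (ℱ : Set (𝒳 → ℝ)) (f₀ : 𝒳 → ℝ) : Set (𝒳 → ℝ) :=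
  {g | ∃ f ∈ ℱ, ∃ α ∈ Icc (0:ℝ) 1, g = fun z => f₀ z + α * (f z - f₀ z)}

theorem statement13 (ψ ψh : ℝ → ℝ) (hψ : SubRoot ψ) (hψh : SubRoot ψh)
    (hψnt : ∃ r, 0 ≤ r ∧ ψ r ≠ 0) (hψhnt : ∃ r, 0 ≤ r ∧ ψh r ≠ 0)
    (rstar rhat : ℝ) (hrstar : 0 < rstar ∧ ψ rstar = rstar)
    (hrhat : 0 < rhat ∧ ψh rhat = rhat)
    (α : ℝ) (hα : α ∈ Icc (0:ℝ) 1)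
    (h1 : α * ψh rstar ≤ ψ rstar) (h2 : ψ rstar ≤ ψh rstar) :
    α ^ 2 * rhat ≤ rstar ∧ rstar ≤ rhat := by
  obtain ⟨hr0, hre⟩ := hrstar
  obtain ⟨hh0, hhe⟩ := hrhat
  obtain ⟨hα0, hα1⟩ := hα
  have ha : (0:ℝ) < Real.sqrt rstar := Real.sqrt_pos.2 hr0
  have hb : (0:ℝ) < Real.sqrt rhat := Real.sqrt_pos.2 hh0
  have ha2 : Real.sqrt rstar ^ 2 = rstar := Real.sq_sqrt hr0.le
  have hb2 : Real.sqrt rhat ^ 2 = rhat := Real.sq_sqrt hh0.le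
  have hr' : rhat / Real.sqrt rhat = Real.sqrt rhat := by
    rw [← hb2]; field_simp; rw [Real.sqrt_sq hb.le]
  have hle : rstar ≤ rhat := by
    by_contra hlt
    push_neg at hlt
    have key := hψh.2.2 rhat rstar hh0 hlt.le
    rw [hhe, hr'] at key
    have h3 : rstar ≤ ψh rstar := by rw [hre] at h2; exact h2
    have h5 : ψh rstar ≤ Real.sqrt rhat * Real.sqrt rstar := by
      rw [div_le_iff₀ ha] at key; linarith
    have hab : Real.sqrt rhat < Real.sqrt rstar := Real.sqrt_lt_sqrt hh0.le hlt
    nlinarith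
  refine ⟨?_, hle⟩
  have key := hψh.2.2 rstar rhat hr0 hle
  rw [hhe, hr'] at key
  have h4 : α * ψh rstar ≤ rstar := by rw [hre] at h1; exact h1
  have h5 : Real.sqrt rhat * Real.sqrt rstar ≤ ψh rstar := by
    rw [le_div_iff₀ ha] at key; linarith
  have h6 : α * (Real.sqrt rhat * Real.sqrt rstar) ≤ Real.sqrt rstar ^ 2 := by
    nlinarith
  have h7 : α * Real.sqrt rhat ≤ Real.sqrt rstar :=
    le_of_mul_le_mul_right (by nlinarith) ha
  nlinarith [mul_le_mul h7 h7 (mul_nonneg hα0 hb.le) ha.le]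
end

section
/- Let ψ : [0,∞) → [0,∞) be a nontrivial sub-root function with fixed point r*. Fix r₀ ≥ r* and define r_{k+1} = ψ(r_k) for all k ≥ 0. Then for all N > 0, r_{N+1} ≤ r_N and r* ≤ r_N ≤ (r₀/r*)^{2^{−N}}·r*. In particular, for any ε > 0, if N ≥ log₂( ln(r₀/r*) / ln(1+ε) ), then r_N ≤ (1+ε)·r*. -/
open MeasureTheory ProbabilityTheory Set

theorem statement17 (ψ : ℝ → ℝ) (hψ : SubRoot ψ)
    (hnontrivial : ∃ r, 0 ≤ r ∧ ψ r ≠ 0)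
    (rstar : ℝ) (hrstar : 0 < rstar ∧ ψ rstar = rstar)
    (r0 : ℝ) (hr0 : rstar ≤ r0)
    (r : ℕ → ℝ) (hinit : r 0 = r0) (hrec : ∀ k : ℕ, r (k + 1) = ψ (r k)) :
    (∀ N : ℕ, 0 < N → r (N + 1) ≤ r N ∧ rstar ≤ r N ∧
      r N ≤ (r0 / rstar) ^ ((2:ℝ) ^ (-(N:ℝ))) * rstar) ∧
    (∀ ε : ℝ, 0 < ε → ∀ N : ℕ,
      Real.logb 2 (Real.log (r0 / rstar) / Real.log (1 + ε)) ≤ (N : ℝ) →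
      r N ≤ (1 + ε) * rstar) := by
  obtain ⟨hrs, hfix⟩ := hrstar
  set a := r0 / rstar with ha_def
  have ha1 : 1 ≤ a := (one_le_div hrs).2 hr0
  have ha0 : 0 < a := lt_of_lt_of_le one_pos ha1
  -- key: for rstar ≤ s, ψ s ≤ √rstar * √s
  have key : ∀ s, rstar ≤ s → ψ s ≤ Real.sqrt rstar * Real.sqrt s := by
    intro s hs
    have hspos : 0 < s := lt_of_lt_of_le hrs hs
    have h := hψ.2.2 rstar s hrs hs
    rw [hfix] at h
    have hsr : rstar / Real.sqrt rstar = Real.sqrt rstar := by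
      rw [Real.div_sqrt]
    rw [hsr] at h
    rw [div_le_iff₀ (Real.sqrt_pos.2 hspos)] at h
    linarith
  -- main induction: bound for all N
  have main : ∀ N : ℕ, rstar ≤ r N ∧ r N ≤ a ^ ((2:ℝ) ^ (-(N:ℝ))) * rstar := by
    intro N
    induction N with
    | zero =>
      constructor
      · rw [hinit]; exact hr0
      · rw [hinit]
        simp only [Nat.cast_zero, neg_zero, Real.rpow_zero, Real.rpow_one]
        rw [div_mul_cancel₀ _ (ne_of_gt hrs)]
    | succ N ih =>
      obtain ⟨ih1, ih2⟩ := ih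
      have hN1 : rstar ≤ r (N + 1) := by
        rw [hrec]
        calc rstar = ψ rstar := hfix.symm
          _ ≤ ψ (r N) := hψ.2.1 rstar (r N) (le_of_lt hrs) ih1
      refine ⟨hN1, ?_⟩
      rw [hrec]
      have hcast : (((N:ℕ)+1:ℕ):ℝ) = (N:ℝ)+1 := by push_cast; ring
      rw [hcast]
      have hb0 : (0:ℝ) ≤ a ^ ((2:ℝ) ^ (-(N:ℝ))) * rstar :=
        mul_nonneg (Real.rpow_nonneg (le_of_lt ha0) _) (le_of_lt hrs)
      calc ψ (r N) ≤ Real.sqrt rstar * Real.sqrt (r N) := key _ ih1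
        _ ≤ Real.sqrt rstar * Real.sqrt (a ^ ((2:ℝ) ^ (-(N:ℝ))) * rstar) := by
            gcongr
        _ = a ^ ((2:ℝ) ^ (-((N:ℝ)+1))) * rstar := by
            have hexp : (2:ℝ) ^ (-(N:ℝ)) * (1/2) = (2:ℝ) ^ (-((N:ℝ)+1)) := by
              rw [neg_add, Real.rpow_add two_pos, Real.rpow_neg_one]
              ring
            rw [Real.sqrt_mul (Real.rpow_nonneg (le_of_lt ha0) _),
              Real.sqrt_eq_rpow (a ^ ((2:ℝ) ^ (-(N:ℝ)))),
              ← Real.rpow_mul (le_of_lt ha0), hexp,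
              mul_comm (Real.sqrt rstar), mul_assoc,
              Real.mul_self_sqrt (le_of_lt hrs)]
  constructor
  · intro N _
    obtain ⟨h1, h2⟩ := main N
    refine ⟨?_, h1, h2⟩
    rw [hrec]
    calc ψ (r N) ≤ Real.sqrt rstar * Real.sqrt (r N) := key _ h1
      _ ≤ Real.sqrt (r N) * Real.sqrt (r N) := by
          gcongr
      _ = r N := Real.mul_self_sqrt (le_trans (le_of_lt hrs) h1)
  · intro ε hε N hN
    obtain ⟨h1, h2⟩ := main N
    have hlo : 0 < Real.log (1 + ε) := Real.log_pos (by linarith)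
    have hq : Real.log a / Real.log (1 + ε) ≤ (2:ℝ) ^ (N:ℝ) := by
      rcases le_or_gt (Real.log a / Real.log (1 + ε)) 0 with h | h
      · exact le_trans h (le_of_lt (Real.rpow_pos_of_pos two_pos _))
      · exact ((Real.logb_le_iff_le_rpow one_lt_two h).1 hN)
    have hla : Real.log a ≤ (2:ℝ) ^ (N:ℝ) * Real.log (1 + ε) := by
      rw [div_le_iff₀ hlo] at hq
      linarith
    have hkey : a ^ ((2:ℝ) ^ (-(N:ℝ))) ≤ 1 + ε := by
      have h2Npos : (0:ℝ) < (2:ℝ) ^ (-(N:ℝ)) := Real.rpow_pos_of_pos two_pos _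
      have hlog : Real.log (a ^ ((2:ℝ) ^ (-(N:ℝ)))) ≤ Real.log (1 + ε) := by
        rw [Real.log_rpow ha0]
        have : (2:ℝ) ^ (-(N:ℝ)) * Real.log a ≤
            (2:ℝ) ^ (-(N:ℝ)) * ((2:ℝ) ^ (N:ℝ) * Real.log (1 + ε)) := by
          apply mul_le_mul_of_nonneg_left hla (le_of_lt h2Npos)
        have hcancel : (2:ℝ) ^ (-(N:ℝ)) * (2:ℝ) ^ (N:ℝ) = 1 := by
          rw [← Real.rpow_add two_pos]; simp
        calc (2:ℝ) ^ (-(N:ℝ)) * Real.log a ≤ _ := this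
          _ = Real.log (1 + ε) := by rw [← mul_assoc, hcancel, one_mul]
      have := Real.exp_le_exp.2 hlog
      rwa [Real.exp_log (Real.rpow_pos_of_pos ha0 _), Real.exp_log (by linarith)] at this
    calc r N ≤ a ^ ((2:ℝ) ^ (-(N:ℝ))) * rstar := h2
      _ ≤ (1 + ε) * rstar := by
          apply mul_le_mul_of_nonneg_right hkey (le_of_lt hrs)
end

section
/- Let 𝒴 = {−1,1}, let ℓ(y,y') = 1[y ≠ y'] be the discrete (0-1) loss, and let ℱ be a class of functions from 𝒳 to {−1,1}. Then for every b ∈ [0,1], E_σ R_n {ℓ_f : f ∈ ℱ, P_n ℓ_f ≤ b} = 1/2 − E_σ min { P_n ℓ(f(X),σ) : f ∈ ℱ, P_n ℓ(f(X),Y) ≤ b }, where P_n ℓ(f(X),σ) = (1/n)∑_{i=1}^n 1[f(X_i) ≠ σ_i] and P_n ℓ(f(X),Y) = (1/n)∑_{i=1}^n 1[f(X_i) ≠ Y_i]. -/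
open MeasureTheory ProbabilityTheory Set

lemma aux_ciSup_const_add {ι : Type*} [Nonempty ι] (c : ℝ) (f : ι → ℝ)
    (hf : BddAbove (Set.range f)) : (⨆ i, c + f i) = c + ⨆ i, f i := by
  have hf' : BddAbove (Set.range fun i => c + f i) := by
    obtain ⟨B, hB⟩ := hf
    exact ⟨c + B, by rintro _ ⟨i, rfl⟩; exact add_le_add_right (hB ⟨i, rfl⟩) c⟩
  apply le_antisymm
  · exact ciSup_le fun i => add_le_add_right (le_ciSup hf i) c
  · have h2 : (⨆ i, f i) ≤ (⨆ i, c + f i) - c :=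
      ciSup_le fun i => le_sub_iff_add_le.mpr (by rw [add_comm]; exact le_ciSup hf' i)
    linarith

lemma aux_ciInf_const_sub {ι : Type*} [Nonempty ι] (c : ℝ) (f : ι → ℝ)
    (hf : BddAbove (Set.range f)) : (⨅ i, c - f i) = c - ⨆ i, f i := by
  obtain ⟨B, hB⟩ := hf
  have hfb : BddBelow (Set.range fun i => c - f i) :=
    ⟨c - B, by rintro _ ⟨i, rfl⟩; have := hB ⟨i, rfl⟩; simp at this ⊢; linarith⟩
  apply le_antisymm
  · have h1 : (⨆ i, f i) ≤ c - ⨅ i, c - f i :=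
      ciSup_le fun i => by have := ciInf_le hfb i; linarith
    linarith
  · exact le_ciInf fun i => by have := le_ciSup ⟨B, hB⟩ i; linarith

instance : IsProbabilityMeasure radLaw := by
  constructor
  simp [radLaw]
  rw [← two_mul, ENNReal.mul_inv_cancel (by norm_num) (by norm_num)]

lemma integrable_dirac_of_meas {f : ℝ → ℝ} (hf : Measurable f) (a : ℝ) :
    Integrable f (Measure.dirac a) := by
  refine ⟨hf.aestronglyMeasurable, ?_⟩
  rw [HasFiniteIntegral, lintegral_dirac' a (by measurability)]
  exact ENNReal.coe_lt_top

lemma integrable_radLaw {f : ℝ → ℝ} (hf : Measurable f) : Integrable f radLaw := by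
  rw [radLaw]
  exact ((integrable_dirac_of_meas hf 1).smul_measure (by norm_num)).add_measure
    ((integrable_dirac_of_meas hf (-1)).smul_measure (by norm_num))

lemma integral_radLaw {f : ℝ → ℝ} (hf : Measurable f) :
    ∫ x, f x ∂radLaw = (f 1 + f (-1)) / 2 := by
  rw [radLaw, integral_add_measure
      ((integrable_dirac_of_meas hf 1).smul_measure (by norm_num))
      ((integrable_dirac_of_meas hf (-1)).smul_measure (by norm_num)),
    integral_smul_measure, integral_smul_measure, integral_dirac, integral_dirac]
  simp [ENNReal.toReal_div]
  ring

lemma radLaw_map_neg : Measure.map (fun x : ℝ => -x) radLaw = radLaw := by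
  have hm : Measurable fun x : ℝ => -x := measurable_neg
  rw [radLaw, Measure.map_add _ _ hm, Measure.map_smul, Measure.map_smul,
    Measure.map_dirac' hm, Measure.map_dirac' hm]
  simp [radLaw, neg_neg]
  exact add_comm _ _

lemma radLaw_compl_pm : radLaw {x : ℝ | ¬(x = 1 ∨ x = -1)} = 0 := by
  have hms : MeasurableSet {x : ℝ | ¬(x = 1 ∨ x = -1)} := by
    have : {x : ℝ | ¬(x = 1 ∨ x = -1)} = ({1, -1} : Set ℝ)ᶜ := by ext x; simp [not_or]
    rw [this]; measurability
  rw [radLaw]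
  simp [Measure.dirac_apply' _ hms]

lemma map_pi_of_indep {Ω : Type*} [MeasurableSpace Ω] (μ : Measure Ω) [IsProbabilityMeasure μ]
    {n : ℕ} (τ : Fin n → Ω → ℝ) (hmeas : ∀ i, Measurable (τ i))
    (hlaw : ∀ i, Measure.map (τ i) μ = radLaw)
    (hind : iIndepFun τ μ) :
    Measure.map (fun ω i => τ i ω) μ = Measure.pi (fun _ => radLaw) := by
  have hm : Measurable fun ω (i : Fin n) => τ i ω := measurable_pi_lambda _ hmeas
  refine (Measure.pi_eq fun s hs => ?_).symm
  rw [Measure.map_apply hm (MeasurableSet.univ_pi hs)]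
  have hpre : (fun ω i => τ i ω) ⁻¹' (Set.pi univ s) = ⋂ i ∈ Finset.univ, τ i ⁻¹' s i := by
    ext ω; simp [Set.mem_pi]
  rw [hpre, hind.measure_inter_preimage_eq_mul Finset.univ (fun i _ => hs i)]
  exact Finset.prod_congr rfl fun i _ => by rw [← hlaw i, Measure.map_apply (hmeas i) (hs i)]

theorem statement18 {𝒳 Ωσ : Type*} [MeasurableSpace Ωσ]
    (μσ : Measure Ωσ) [IsProbabilityMeasure μσ]
    {n : ℕ} (hn : 0 < n)
    (Xv : Fin n → 𝒳) (Yv : Fin n → ℝ) (hY : ∀ i, Yv i = 1 ∨ Yv i = -1)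
    (σ : Fin n → Ωσ → ℝ) (hσmeas : ∀ i, Measurable (σ i))
    (hσlaw : ∀ i, Measure.map (σ i) μσ = radLaw)
    (hσindep : iIndepFun σ μσ)
    (ℱ : Set (𝒳 → ℝ)) (hfval : ∀ f ∈ ℱ, ∀ z, f z = 1 ∨ f z = -1)
    (b : ℝ) (hb : b ∈ Icc (0:ℝ) 1)
    (hne : ∃ f ∈ ℱ, (∑ i, if f (Xv i) = Yv i then (0:ℝ) else 1) / n ≤ b) :
    (∫ ωσ, ⨆ f : {f : 𝒳 → ℝ //
          f ∈ ℱ ∧ (∑ i, if f (Xv i) = Yv i then (0:ℝ) else 1) / n ≤ b},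
        (∑ i, σ i ωσ * (if f.1 (Xv i) = Yv i then (0:ℝ) else 1)) / n ∂μσ)
      = 1 / 2 - ∫ ωσ, ⨅ f : {f : 𝒳 → ℝ //
          f ∈ ℱ ∧ (∑ i, if f (Xv i) = Yv i then (0:ℝ) else 1) / n ≤ b},
        (∑ i, if f.1 (Xv i) = σ i ωσ then (0:ℝ) else 1) / n ∂μσ := by
  classical
  have hn0 : (n:ℝ) ≠ 0 := Nat.cast_ne_zero.mpr hn.ne'
  obtain ⟨f₀, hf₀F, hf₀b⟩ := hne
  set Sub := {f : 𝒳 → ℝ // f ∈ ℱ ∧ (∑ i, if f (Xv i) = Yv i then (0:ℝ) else 1) / n ≤ b}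
    with hSubdef
  haveI hSne : Nonempty Sub := ⟨⟨f₀, hf₀F, hf₀b⟩⟩
  have hval : ∀ (f : Sub) i, f.1 (Xv i) = 1 ∨ f.1 (Xv i) = -1 := fun f i => hfval f.1 f.2.1 (Xv i)
  -- termwise bound
  have hterm_abs : ∀ (τ : Fin n → ℝ) (f : Sub),
      |(∑ i, τ i * f.1 (Xv i)) / (2*n)| ≤ (∑ i, |τ i|) / (2*n) := by
    intro τ f
    rw [abs_div, abs_of_nonneg (by positivity : (0:ℝ) ≤ 2*(n:ℝ))]
    gcongr
    refine (Finset.abs_sum_le_sum_abs _ _).trans (le_of_eq ?_)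
    refine Finset.sum_congr rfl fun i _ => ?_
    rcases hval f i with h | h <;> rw [h] <;> simp
  have hBdd : ∀ τ : Fin n → ℝ,
      BddAbove (Set.range fun f : Sub => (∑ i, τ i * f.1 (Xv i)) / (2*n)) :=
    fun τ => ⟨(∑ i, |τ i|) / (2*n), by rintro _ ⟨f, rfl⟩; exact (abs_le.mp (hterm_abs τ f)).2⟩
  set H : (Fin n → ℝ) → ℝ := fun τ => ⨆ f : Sub, (∑ i, τ i * f.1 (Xv i)) / (2*n) with hHdef
  have hHabs : ∀ τ, |H τ| ≤ (∑ i, |τ i|) / (2*n) := by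
    intro τ
    rw [abs_le]
    refine ⟨?_, ciSup_le fun f => (abs_le.mp (hterm_abs τ f)).2⟩
    have h1 := le_ciSup (hBdd τ) (Classical.arbitrary Sub)
    have h2 := (abs_le.mp (hterm_abs τ (Classical.arbitrary Sub))).1
    exact le_trans h2 h1
  -- measurability of H
  have hVfin : (Set.range fun f : Sub => fun i => f.1 (Xv i)).Finite := by
    apply Set.Finite.subset
      (Set.Finite.pi (fun i : Fin n => (Set.finite_singleton (-1:ℝ)).insert 1))
    rintro _ ⟨f, rfl⟩
    intro i _
    rcases hval f i with h | h <;> simp [h]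
  have hFne : hVfin.toFinset.Nonempty := by
    rw [Set.Finite.toFinset_nonempty]; exact Set.range_nonempty _
  have hHrep : ∀ τ, H τ = hVfin.toFinset.sup' hFne (fun v => (∑ i, τ i * v i) / (2*n)) := by
    intro τ
    rw [Finset.sup'_eq_csSup_image, Set.Finite.coe_toFinset, sSup_image',
      iSup_range' (fun v : Fin n → ℝ => (∑ i, τ i * v i) / (2*n))
        (fun f : Sub => fun i => f.1 (Xv i))]
  have hHmeas : Measurable H := by
    rw [funext hHrep]
    have hm := Finset.measurable_sup' hFne
      (f := fun (v : Fin n → ℝ) (τ : Fin n → ℝ) => (∑ i, τ i * v i) / (2*n))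
      (fun v _ => (Finset.measurable_sum _ fun i _ =>
        (measurable_pi_apply i).mul_const _).div_const _)
    have heq : (fun (τ : Fin n → ℝ) => hVfin.toFinset.sup' hFne fun v => (∑ i, τ i * v i) / (2*n))
        = hVfin.toFinset.sup' hFne (fun (v τ : Fin n → ℝ) => (∑ i, τ i * v i) / (2*n)) := by
      funext τ; rw [Finset.sup'_apply]
    rw [heq]; exact hm
  -- scalar identities
  have hscal1 : ∀ s y v : ℝ, (y = 1 ∨ y = -1) → (v = 1 ∨ v = -1) →
      s * (if v = y then (0:ℝ) else 1) = s / 2 + (-y * s) * v / 2 := by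
    intro s y v hy hv
    rcases hy with rfl | rfl <;> rcases hv with rfl | rfl <;> norm_num <;> ring
  have hscal2 : ∀ s v : ℝ, (s = 1 ∨ s = -1) → (v = 1 ∨ v = -1) →
      (if v = s then (0:ℝ) else 1) = 1/2 - s * v / 2 := by
    intro s v hs hv
    rcases hs with rfl | rfl <;> rcases hv with rfl | rfl <;> norm_num <;> ring
  -- key pointwise identities
  have key1 : ∀ ω, (⨆ f : Sub, (∑ i, σ i ω * (if f.1 (Xv i) = Yv i then (0:ℝ) else 1)) / n)
      = (∑ i, σ i ω) / (2*n) + H (fun i => -Yv i * σ i ω) := by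
    intro ω
    have hterm : ∀ f : Sub, (∑ i, σ i ω * (if f.1 (Xv i) = Yv i then (0:ℝ) else 1)) / n
        = (∑ i, σ i ω) / (2*n) + (∑ i, (-Yv i * σ i ω) * f.1 (Xv i)) / (2*n) := by
      intro f
      have hper : ∀ i, σ i ω * (if f.1 (Xv i) = Yv i then (0:ℝ) else 1)
          = σ i ω / 2 + ((-Yv i * σ i ω) * f.1 (Xv i)) / 2 :=
        fun i => hscal1 (σ i ω) (Yv i) (f.1 (Xv i)) (hY i) (hval f i)
      rw [Finset.sum_congr rfl fun i _ => hper i, Finset.sum_add_distrib,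
        ← Finset.sum_div, ← Finset.sum_div]
      field_simp
    calc (⨆ f : Sub, (∑ i, σ i ω * (if f.1 (Xv i) = Yv i then (0:ℝ) else 1)) / n)
        = ⨆ f : Sub, ((∑ i, σ i ω) / (2*n) + (∑ i, (-Yv i * σ i ω) * f.1 (Xv i)) / (2*n)) :=
          congrArg _ (funext hterm)
      _ = _ := aux_ciSup_const_add _ _ (hBdd _)
  have key2 : ∀ ω, (∀ i, σ i ω = 1 ∨ σ i ω = -1) →
      (⨅ f : Sub, (∑ i, if f.1 (Xv i) = σ i ω then (0:ℝ) else 1) / n)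
        = 1/2 - H (fun i => σ i ω) := by
    intro ω hω
    have hterm : ∀ f : Sub, (∑ i, if f.1 (Xv i) = σ i ω then (0:ℝ) else 1) / n
        = 1/2 - (∑ i, σ i ω * f.1 (Xv i)) / (2*n) := by
      intro f
      have h1 : ∀ i, (if f.1 (Xv i) = σ i ω then (0:ℝ) else 1) = 1/2 - σ i ω * f.1 (Xv i) / 2 :=
        fun i => hscal2 (σ i ω) (f.1 (Xv i)) (hω i) (hval f i)
      rw [Finset.sum_congr rfl fun i _ => h1 i, Finset.sum_sub_distrib, Finset.sum_const,
        Finset.card_univ, Fintype.card_fin, ← Finset.sum_div]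
      field_simp
      rw [nsmul_eq_mul]; ring
    calc (⨅ f : Sub, (∑ i, if f.1 (Xv i) = σ i ω then (0:ℝ) else 1) / n)
        = ⨅ f : Sub, (1/2 - (∑ i, σ i ω * f.1 (Xv i)) / (2*n)) := congrArg _ (funext hterm)
      _ = _ := aux_ciInf_const_sub _ _ (hBdd _)
  -- a.e. ±1 values
  have hA : ∀ᵐ ω ∂μσ, ∀ i, σ i ω = 1 ∨ σ i ω = -1 := by
    rw [ae_all_iff]
    intro i
    have hms : MeasurableSet {x : ℝ | ¬(x = 1 ∨ x = -1)} := by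
      have : {x : ℝ | ¬(x = 1 ∨ x = -1)} = ({1, -1} : Set ℝ)ᶜ := by ext x; simp [not_or]
      rw [this]; measurability
    have h0 : μσ {ω | ¬(σ i ω = 1 ∨ σ i ω = -1)} = 0 := by
      have hp : {ω | ¬(σ i ω = 1 ∨ σ i ω = -1)} = σ i ⁻¹' {x | ¬(x = 1 ∨ x = -1)} := rfl
      rw [hp, ← Measure.map_apply (hσmeas i) hms, hσlaw i]
      exact radLaw_compl_pm
    exact h0
  -- integrability of σ i and zero mean
  have hσint : ∀ i, Integrable (σ i) μσ := by
    intro i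
    have h0 : Integrable (fun x : ℝ => x) (Measure.map (σ i) μσ) := by
      rw [hσlaw i]; exact integrable_radLaw measurable_id
    exact (integrable_map_measure measurable_id.aestronglyMeasurable
      (hσmeas i).aemeasurable).mp h0
  have hσzero : ∀ i, ∫ ω, σ i ω ∂μσ = 0 := by
    intro i
    have h := integral_map (μ := μσ) (hσmeas i).aemeasurable
      (f := fun x : ℝ => x) measurable_id.aestronglyMeasurable
    rw [hσlaw i, integral_radLaw (f := fun x : ℝ => x) measurable_id] at h
    simpa using h.symm
  -- laws of the vectors
  have hmap1 : Measure.map (fun ω i => σ i ω) μσ = Measure.pi (fun _ => radLaw) :=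
    map_pi_of_indep μσ σ hσmeas hσlaw hσindep
  have hτ'meas : ∀ i, Measurable (fun ω => -Yv i * σ i ω) := fun i => (hσmeas i).const_mul _
  have hτ'law : ∀ i, Measure.map (fun ω => -Yv i * σ i ω) μσ = radLaw := by
    intro i
    have hc : (fun ω => -Yv i * σ i ω) = (fun x : ℝ => -Yv i * x) ∘ σ i := rfl
    rw [hc, ← Measure.map_map (measurable_const_mul _) (hσmeas i), hσlaw i]
    rcases hY i with h | h <;> rw [h]
    · have he : (fun x : ℝ => -(1:ℝ) * x) = fun x : ℝ => -x := by funext x; ring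
      rw [he, radLaw_map_neg]
    · have he : (fun x : ℝ => -(-1:ℝ) * x) = id := by funext x; simp
      rw [he, Measure.map_id]
  have hτ'indep : iIndepFun (fun i ω => -Yv i * σ i ω) μσ :=
    hσindep.comp (fun i => fun x : ℝ => -Yv i * x) (fun i => measurable_const_mul _)
  have hmap2 : Measure.map (fun ω i => -Yv i * σ i ω) μσ = Measure.pi (fun _ => radLaw) :=
    map_pi_of_indep μσ _ hτ'meas hτ'law hτ'indep
  -- integrability of H compositions
  have hwmeas1 : Measurable (fun ω i => σ i ω) := measurable_pi_lambda _ hσmeas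
  have hwmeas2 : Measurable (fun ω i => -Yv i * σ i ω) := measurable_pi_lambda _ hτ'meas
  have hg : Integrable (fun ω => (∑ i, |σ i ω|) / (2*n)) μσ :=
    (integrable_finset_sum _ fun i _ => (hσint i).abs).div_const _
  have hint1 : Integrable (fun ω => H fun i => σ i ω) μσ := by
    refine Integrable.mono' hg (hHmeas.comp hwmeas1).aestronglyMeasurable ?_
    filter_upwards with ω
    simpa [Real.norm_eq_abs] using hHabs (fun i => σ i ω)
  have hint2 : Integrable (fun ω => H fun i => -Yv i * σ i ω) μσ := by
    refine Integrable.mono' hg (hHmeas.comp hwmeas2).aestronglyMeasurable ?_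
    filter_upwards with ω
    have h := hHabs (fun i => -Yv i * σ i ω)
    have heq : (∑ i, |(-Yv i * σ i ω)|) = ∑ i, |σ i ω| :=
      Finset.sum_congr rfl fun i _ => by
        rcases hY i with h' | h' <;> rw [h'] <;> simp [abs_mul]
    rw [Real.norm_eq_abs]
    calc |H fun i => -Yv i * σ i ω| ≤ (∑ i, |(-Yv i * σ i ω)|) / (2*n) := h
      _ = (∑ i, |σ i ω|) / (2*n) := by rw [heq]
  have hintc : Integrable (fun ω => (∑ i, σ i ω) / (2*n)) μσ :=
    (integrable_finset_sum _ fun i _ => hσint i).div_const _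
  -- equality of the two H integrals
  have hHH : ∫ ω, H (fun i => -Yv i * σ i ω) ∂μσ = ∫ ω, H (fun i => σ i ω) ∂μσ := by
    calc ∫ ω, H (fun i => -Yv i * σ i ω) ∂μσ
        = ∫ x, H x ∂(Measure.map (fun ω i => -Yv i * σ i ω) μσ) :=
          (integral_map hwmeas2.aemeasurable hHmeas.aestronglyMeasurable).symm
      _ = ∫ x, H x ∂(Measure.map (fun ω i => σ i ω) μσ) := by rw [hmap1, hmap2]
      _ = ∫ ω, H (fun i => σ i ω) ∂μσ :=
          integral_map hwmeas1.aemeasurable hHmeas.aestronglyMeasurable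
  -- assemble
  have hc0 : ∫ ω, (∑ i, σ i ω) / (2*n) ∂μσ = 0 := by
    rw [integral_div, integral_finset_sum _ (fun i _ => hσint i)]
    simp [hσzero]
  have hL : (∫ ω, ⨆ f : Sub, (∑ i, σ i ω * (if f.1 (Xv i) = Yv i then (0:ℝ) else 1)) / n ∂μσ)
      = ∫ ω, H (fun i => σ i ω) ∂μσ := by
    rw [integral_congr_ae (Filter.Eventually.of_forall key1), integral_add hintc hint2, hc0,
      zero_add, hHH]
  have hR : (∫ ω, ⨅ f : Sub, (∑ i, if f.1 (Xv i) = σ i ω then (0:ℝ) else 1) / n ∂μσ)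
      = 1/2 - ∫ ω, H (fun i => σ i ω) ∂μσ := by
    have he : (∫ ω, ⨅ f : Sub, (∑ i, if f.1 (Xv i) = σ i ω then (0:ℝ) else 1) / n ∂μσ)
        = ∫ ω, (1/2 - H (fun i => σ i ω)) ∂μσ :=
      integral_congr_ae (hA.mono fun ω hω => key2 ω hω)
    rw [he, integral_sub (integrable_const _) hint1, integral_const]
    simp
  rw [hL, hR]
  ring
end

section
/- Let H be a Hilbert space of real-valued functions on 𝒳 with reproducing kernel k (i.e., k(x,·) ∈ H and f(x) = ⟨f, k(x,·)⟩ for all f ∈ H and x ∈ 𝒳), and let ℱ = {f ∈ H : ‖f‖ ≤ 1} be its unit ball. Given points X_1,…,X_n ∈ 𝒳, let T̂_n = (1/n)(k(X_i,X_j))_{i,j=1,…,n} be the normalized Gram matrix with eigenvalues λ̂_1 ≥ λ̂_2 ≥ ⋯ ≥ λ̂_n. Then for every r > 0, E_σ R_n {f ∈ ℱ : P_n f² ≤ r} ≤ ( (2/n)·∑_{i=1}^n min{r, λ̂_i} )^{1/2}. -/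
open MeasureTheory ProbabilityTheory Set

noncomputable def gramMat {𝒳 H : Type*} [NormedAddCommGroup H] [InnerProductSpace ℝ H]
    {n : ℕ} (Xv : Fin n → 𝒳) (K : 𝒳 → H) : Matrix (Fin n) (Fin n) ℝ :=
  Matrix.of fun i j => (inner ℝ (K (Xv i)) (K (Xv j)) : ℝ) / n

lemma gram_psd {𝒳 H : Type*} [NormedAddCommGroup H] [InnerProductSpace ℝ H]
    {n : ℕ} (Xv : Fin n → 𝒳) (K : 𝒳 → H) : (gramMat Xv K).PosSemidef := by
  have hsym : (gramMat Xv K).IsHermitian := by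
    ext i j
    simp [gramMat, Matrix.conjTranspose_apply, real_inner_comm]
  refine Matrix.PosSemidef.of_dotProduct_mulVec_nonneg hsym fun x => ?_
  have h : dotProduct (star x) ((gramMat Xv K).mulVec x)
      = (inner ℝ (∑ i, x i • K (Xv i)) (∑ i, x i • K (Xv i)) : ℝ) / n := by
    simp only [dotProduct, Matrix.mulVec, gramMat, Matrix.of_apply, Pi.star_apply,
      star_trivial, inner_sum, sum_inner, real_inner_smul_left, real_inner_smul_right,
      Finset.mul_sum, Finset.sum_div]
    congr 1; ext i; congr 1; ext j; rw [real_inner_comm]; ring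
  rw [h]
  have := real_inner_self_nonneg (x := ∑ i, x i • K (Xv i))
  positivity

lemma core_bound {𝒳 H : Type*} [NormedAddCommGroup H] [InnerProductSpace ℝ H]
    {n : ℕ} (hn : 0 < n) (Xv : Fin n → 𝒳) (K : 𝒳 → H)
    (hHerm : (gramMat Xv K).IsHermitian) (r : ℝ) (hr : 0 < r)
    (s : Fin n → ℝ) (f : H) (hf1 : ‖f‖ ≤ 1)
    (hf2 : (∑ i, (inner ℝ f (K (Xv i)) : ℝ) ^ 2) / n ≤ r) :
    (∑ i, s i * (inner ℝ f (K (Xv i)) : ℝ)) / n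
      ≤ Real.sqrt (2 / n * ∑ j, min r (hHerm.eigenvalues j) *
          (∑ i, s i * hHerm.eigenvectorBasis j i) ^ 2) := by
  classical
  have hnR : (0:ℝ) < n := by exact_mod_cast hn
  set A := gramMat Xv K with hA
  set b := hHerm.eigenvectorBasis with hb
  set lam' := hHerm.eigenvalues with hlam
  have hpsd : A.PosSemidef := gram_psd Xv K
  have hlam0 : ∀ j, 0 ≤ lam' j := fun j => hpsd.eigenvalues_nonneg j
  set v : EuclideanSpace ℝ (Fin n) := WithLp.toLp 2 (fun i => (inner ℝ f (K (Xv i)) : ℝ)) with hv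
  set sE : EuclideanSpace ℝ (Fin n) := WithLp.toLp 2 s with hsE
  set w : Fin n → H := fun j => ∑ i, b j i • K (Xv i) with hw
  have hip : ∀ x y : EuclideanSpace ℝ (Fin n), (inner ℝ x y : ℝ) = ∑ i, x i * y i := by
    intro x y; rw [PiLp.inner_apply]; simp [RCLike.inner_apply, mul_comm]
  have hortho : ∀ j k, (inner ℝ (b j) (b k) : ℝ) = if j = k then 1 else 0 :=
    orthonormal_iff_ite.mp b.orthonormal
  have hwf : ∀ j, (inner ℝ f (w j) : ℝ) = (inner ℝ (b j) v : ℝ) := by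
    intro j
    rw [hip]
    simp [hw, inner_sum, real_inner_smul_right, hv]
  have hKA : ∀ i l, (inner ℝ (K (Xv i)) (K (Xv l)) : ℝ) = n * A i l := by
    intro i l; rw [hA]; simp only [gramMat, Matrix.of_apply]; field_simp
  have hAb : ∀ k i, A.mulVec (b k) i = lam' k * b k i := by
    intro k i
    have h := hHerm.mulVec_eigenvectorBasis k
    have := congrFun h i
    simpa using this
  have hww : ∀ j k, (inner ℝ (w j) (w k) : ℝ) = if j = k then (n : ℝ) * lam' j else 0 := by
    intro j k
    have h1 : (inner ℝ (w j) (w k) : ℝ) = (n : ℝ) * (lam' k * (inner ℝ (b j) (b k) : ℝ)) := by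
      rw [hw]
      simp only [sum_inner, inner_sum, real_inner_smul_left, real_inner_smul_right]
      rw [Finset.sum_comm]
      have h2 : ∀ i, (∑ l, b k l * (b j i * (inner ℝ (K (Xv i)) (K (Xv l)) : ℝ)))
          = (n : ℝ) * (b j i * (lam' k * b k i)) := by
        intro i
        have h3 : (∑ l, b k l * (b j i * (inner ℝ (K (Xv i)) (K (Xv l)) : ℝ)))
            = (n:ℝ) * (b j i * A.mulVec (b k) i) := by
          simp only [Matrix.mulVec, dotProduct, Finset.mul_sum]
          refine Finset.sum_congr rfl fun l _ => ?_
          rw [hKA i l]; ring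
        rw [h3, hAb k i]
      calc (∑ i, ∑ l, b k l * (b j i * (inner ℝ (K (Xv i)) (K (Xv l)) : ℝ)))
          = ∑ i, (n:ℝ) * (b j i * (lam' k * b k i)) := Finset.sum_congr rfl fun i _ => h2 i
        _ = (n : ℝ) * (lam' k * ∑ i, b j i * b k i) := by rw [Finset.mul_sum]; congr 1; rw [Finset.mul_sum]; refine Finset.sum_congr rfl fun i _ => by ring
        _ = (n : ℝ) * (lam' k * (inner ℝ (b j) (b k) : ℝ)) := by rw [hip]
    rw [h1, hortho j k]
    by_cases hjk : j = k
    · subst hjk; simp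
    · simp [hjk]
  
  have hw0 : ∀ j, lam' j = 0 → w j = 0 := by
    intro j hj
    have h := hww j j
    rw [if_pos rfl, hj, mul_zero] at h
    exact inner_self_eq_zero.mp h
  set S : Finset (Fin n) := Finset.univ.filter (fun j => 0 < lam' j) with hS
  have hmemS : ∀ j, j ∈ S ↔ 0 < lam' j := by intro j; simp [hS]
  set c : Fin n → ℝ := fun j => (inner ℝ (b j) v : ℝ) with hc
  have hf1sq : ‖f‖ ^ 2 ≤ 1 := by nlinarith [norm_nonneg f]
  have hBessel : ∑ j ∈ S, c j ^ 2 / ((n:ℝ) * lam' j) ≤ 1 := by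
    have he : Orthonormal ℝ (fun j : {j : Fin n // 0 < lam' j} =>
        (Real.sqrt ((n:ℝ) * lam' j.1))⁻¹ • w j.1) := by
      rw [orthonormal_iff_ite]
      intro j k
      rw [real_inner_smul_left, real_inner_smul_right, hww]
      by_cases hjk : j = k
      · subst hjk
        rw [if_pos rfl, if_pos rfl]
        have hq : 0 < (n:ℝ) * lam' (j:Fin n) := mul_pos hnR j.2
        have hs0 : Real.sqrt ((n:ℝ) * lam' (j:Fin n)) ≠ 0 := (Real.sqrt_pos.mpr hq).ne'
        have h2 : (Real.sqrt ((n:ℝ) * lam' (j:Fin n)))⁻¹ *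
            ((Real.sqrt ((n:ℝ) * lam' (j:Fin n)))⁻¹ * ((n:ℝ) * lam' (j:Fin n)))
            = ((n:ℝ) * lam' (j:Fin n)) / (Real.sqrt ((n:ℝ) * lam' (j:Fin n)) ^ 2) := by
          rw [sq]; field_simp
        rw [h2, Real.sq_sqrt hq.le, div_self hq.ne']
      · have hne : (j:Fin n) ≠ k := fun h => hjk (Subtype.ext h)
        rw [if_neg hne, if_neg hjk, mul_zero, mul_zero]
    have hbes := Orthonormal.sum_inner_products_le (x := f)
      (s := (Finset.univ : Finset {j : Fin n // 0 < lam' j})) he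
    have hsub : ∑ j ∈ S, c j ^ 2 / ((n:ℝ) * lam' j)
        = ∑ j : {j : Fin n // 0 < lam' j}, c (j:Fin n) ^ 2 / ((n:ℝ) * lam' (j:Fin n)) :=
      Finset.sum_subtype _ (fun j => hmemS j) _
    rw [hsub]
    refine le_trans (le_of_eq ?_) (le_trans hbes hf1sq)
    refine Finset.sum_congr rfl fun j _ => ?_
    have hq : 0 < (n:ℝ) * lam' (j:Fin n) := mul_pos hnR j.2
    rw [real_inner_smul_left]
    have hwfj : (inner ℝ (w (j:Fin n)) f : ℝ) = c (j:Fin n) := by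
      rw [real_inner_comm]; exact hwf _
    rw [hwfj, Real.norm_eq_abs, sq_abs, mul_pow, inv_pow, Real.sq_sqrt hq.le,
      div_eq_mul_inv, mul_comm]
  have hParc : ∑ j, (inner ℝ sE (b j) : ℝ) * c j = ∑ i, s i * v i := by
    rw [b.sum_inner_mul_inner sE v]
    exact hip sE v
  have hParv : ∑ j, c j ^ 2 = ∑ i, v i ^ 2 := by
    have h := b.sum_inner_mul_inner v v
    rw [hip v v] at h
    calc ∑ j, c j ^ 2 = ∑ j, (inner ℝ v (b j) : ℝ) * (inner ℝ (b j) v : ℝ) := by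
          refine Finset.sum_congr rfl fun j _ => ?_
          rw [sq]
          have hcomm : (inner ℝ v (b j) : ℝ) = c j := real_inner_comm (b j) v
          rw [hcomm]
      _ = ∑ i, v i * v i := h
      _ = ∑ i, v i ^ 2 := by simp [sq]
  have hv2 : ∑ i, v i ^ 2 ≤ (n:ℝ) * r := by
    rw [div_le_iff₀ hnR] at hf2
    calc ∑ i, v i ^ 2 = ∑ i, (inner ℝ f (K (Xv i)) : ℝ) ^ 2 := rfl
      _ ≤ r * n := hf2
      _ = (n:ℝ) * r := by ring
  set st : Fin n → ℝ := fun j => ∑ i, s i * b j i with hst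
  have hstE : ∀ j, (inner ℝ sE (b j) : ℝ) = st j := fun j => hip sE (b j)
  set T : ℝ := ∑ j, min r (lam' j) * st j ^ 2 with hT
  have hmin0 : ∀ j, 0 ≤ min r (lam' j) := fun j => le_min hr.le (hlam0 j)
  have hT0 : 0 ≤ T := Finset.sum_nonneg fun j _ => mul_nonneg (hmin0 j) (sq_nonneg _)
  set q : Fin n → ℝ := fun j => (n:ℝ) * min r (lam' j) with hq
  have hqpos : ∀ j ∈ S, 0 < q j :=
    fun j hj => mul_pos hnR (lt_min hr ((hmemS j).mp hj))
  have hcoff : ∀ j, j ∉ S → c j = 0 := by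
    intro j hj
    have hl0 : lam' j = 0 :=
      le_antisymm (not_lt.mp (fun h => hj ((hmemS j).mpr h))) (hlam0 j)
    rw [hc]
    simp only
    rw [← hwf j, hw0 j hl0, inner_zero_right]
  have hsum_eq : ∑ i, s i * v i = ∑ j ∈ S, st j * c j := by
    rw [← hParc]
    rw [Finset.sum_subset (Finset.subset_univ S) ?van]
    case van =>
      intro j _ hj
      rw [hcoff j hj, mul_zero]
    refine Finset.sum_congr rfl fun j _ => ?_
    rw [hstE j]
  have hcs : (∑ j ∈ S, st j * c j) ^ 2 ≤ (∑ j ∈ S, c j ^ 2 / q j) * (∑ j ∈ S, q j * st j ^ 2) := by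
    have h := Finset.sum_mul_sq_le_sq_mul_sq S (fun j => c j / Real.sqrt (q j))
      (fun j => Real.sqrt (q j) * st j)
    have hA1 : ∑ j ∈ S, (c j / Real.sqrt (q j)) * (Real.sqrt (q j) * st j) = ∑ j ∈ S, st j * c j := by
      refine Finset.sum_congr rfl fun j hj => ?_
      have h0 : Real.sqrt (q j) ≠ 0 := (Real.sqrt_pos.mpr (hqpos j hj)).ne'
      field_simp
    have hA2 : ∑ j ∈ S, (c j / Real.sqrt (q j)) ^ 2 = ∑ j ∈ S, c j ^ 2 / q j := by
      refine Finset.sum_congr rfl fun j hj => ?_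
      rw [div_pow, Real.sq_sqrt (hqpos j hj).le]
    have hA3 : ∑ j ∈ S, (Real.sqrt (q j) * st j) ^ 2 = ∑ j ∈ S, q j * st j ^ 2 := by
      refine Finset.sum_congr rfl fun j hj => ?_
      rw [mul_pow, Real.sq_sqrt (hqpos j hj).le]
    rw [hA1, hA2, hA3] at h
    exact h
  have hfac1 : ∑ j ∈ S, c j ^ 2 / q j ≤ 2 := by
    have hterm : ∀ j ∈ S, c j ^ 2 / q j ≤ c j ^ 2 / ((n:ℝ)*r) + c j ^ 2 / ((n:ℝ) * lam' j) := by
      intro j hj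
      have hlj : 0 < lam' j := (hmemS j).mp hj
      rcases min_cases r (lam' j) with ⟨hmin, _⟩ | ⟨hmin, _⟩
      · rw [hq]; simp only; rw [hmin]
        exact le_add_of_nonneg_right (div_nonneg (sq_nonneg _) (by positivity))
      · rw [hq]; simp only; rw [hmin]
        exact le_add_of_nonneg_left (div_nonneg (sq_nonneg _) (by positivity))
    calc ∑ j ∈ S, c j ^ 2 / q j
        ≤ ∑ j ∈ S, (c j ^ 2 / ((n:ℝ)*r) + c j ^ 2 / ((n:ℝ) * lam' j)) := Finset.sum_le_sum hterm
      _ = (∑ j ∈ S, c j ^ 2 / ((n:ℝ)*r)) + ∑ j ∈ S, c j ^ 2 / ((n:ℝ) * lam' j) :=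
          Finset.sum_add_distrib
      _ ≤ 1 + 1 := by
          refine add_le_add ?_ hBessel
          have h1 : ∑ j ∈ S, c j ^ 2 / ((n:ℝ)*r) ≤ ∑ j, c j ^ 2 / ((n:ℝ)*r) :=
            Finset.sum_le_sum_of_subset_of_nonneg (Finset.subset_univ S)
              (fun j _ _ => div_nonneg (sq_nonneg _) (by positivity))
          refine le_trans h1 ?_
          rw [← Finset.sum_div]
          rw [div_le_one (by positivity)]
          rw [hParv]
          exact hv2
      _ = 2 := by norm_num
  have hfac2 : ∑ j ∈ S, q j * st j ^ 2 ≤ (n:ℝ) * T := by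
    rw [hT, Finset.mul_sum]
    have : ∀ j, q j * st j ^ 2 = (n:ℝ) * (min r (lam' j) * st j ^ 2) := by
      intro j; rw [hq]; ring
    calc ∑ j ∈ S, q j * st j ^ 2 = ∑ j ∈ S, (n:ℝ) * (min r (lam' j) * st j ^ 2) :=
          Finset.sum_congr rfl fun j _ => this j
      _ ≤ ∑ j, (n:ℝ) * (min r (lam' j) * st j ^ 2) :=
          Finset.sum_le_sum_of_subset_of_nonneg (Finset.subset_univ S)
            (fun j _ _ => mul_nonneg hnR.le (mul_nonneg (hmin0 j) (sq_nonneg _)))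
  have hfacs0 : 0 ≤ ∑ j ∈ S, q j * st j ^ 2 :=
    Finset.sum_nonneg fun j hj => mul_nonneg (hqpos j hj).le (sq_nonneg _)
  have hsq : (∑ j ∈ S, st j * c j) ^ 2 ≤ 2 * ((n:ℝ) * T) := by
    calc (∑ j ∈ S, st j * c j) ^ 2
        ≤ (∑ j ∈ S, c j ^ 2 / q j) * (∑ j ∈ S, q j * st j ^ 2) := hcs
      _ ≤ 2 * ((n:ℝ) * T) := by
          apply mul_le_mul hfac1 hfac2 hfacs0 (by norm_num)
  have hle : ∑ j ∈ S, st j * c j ≤ Real.sqrt (2 * ((n:ℝ) * T)) := by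
    calc ∑ j ∈ S, st j * c j ≤ |∑ j ∈ S, st j * c j| := le_abs_self _
      _ = Real.sqrt ((∑ j ∈ S, st j * c j) ^ 2) := (Real.sqrt_sq_eq_abs _).symm
      _ ≤ Real.sqrt (2 * ((n:ℝ) * T)) := Real.sqrt_le_sqrt hsq
  have hgoal1 : (∑ i, s i * (inner ℝ f (K (Xv i)) : ℝ)) / n ≤ Real.sqrt (2 * ((n:ℝ) * T)) / n := by
    have hnum : (∑ i, s i * (inner ℝ f (K (Xv i)) : ℝ)) ≤ Real.sqrt (2 * ((n:ℝ) * T)) := by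
      rw [show (∑ i, s i * (inner ℝ f (K (Xv i)) : ℝ)) = ∑ i, s i * v i from rfl, hsum_eq]
      exact hle
    gcongr
  have hsqrt_eq : Real.sqrt (2 * ((n:ℝ) * T)) / n = Real.sqrt (2 / (n:ℝ) * T) := by
    rw [show (2 / (n:ℝ) * T) = (2 * ((n:ℝ) * T)) / (n:ℝ)^2 by field_simp]
    rw [Real.sqrt_div (by positivity), Real.sqrt_sq hnR.le]
  calc (∑ i, s i * (inner ℝ f (K (Xv i)) : ℝ)) / n
      ≤ Real.sqrt (2 * ((n:ℝ) * T)) / n := hgoal1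
    _ = Real.sqrt (2 / (n:ℝ) * T) := hsqrt_eq


lemma sigma_ae_pm {Ωσ : Type*} [MeasurableSpace Ωσ] (μσ : Measure Ωσ)
    (g : Ωσ → ℝ) (hm : Measurable g) (hl : Measure.map g μσ = radLaw) :
    ∀ᵐ ω ∂μσ, g ω = 1 ∨ g ω = -1 := by
  have hset : MeasurableSet ({1, -1} : Set ℝ) := (measurableSet_singleton (-1:ℝ)).insert 1
  have h0 : μσ (g ⁻¹' ({1, -1} : Set ℝ)ᶜ) = 0 := by
    rw [← Measure.map_apply hm hset.compl, hl]
    simp only [radLaw, Measure.coe_add, Measure.coe_smul, Pi.add_apply, Pi.smul_apply,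
      smul_eq_mul]
    rw [Measure.dirac_apply' _ hset.compl, Measure.dirac_apply' _ hset.compl]
    simp
  have hseteq : {ω | ¬(g ω = 1 ∨ g ω = -1)} = g ⁻¹' ({1, -1} : Set ℝ)ᶜ := by
    ext ω; simp [not_or]
  rw [ae_iff, hseteq]
  exact h0
lemma integral_id_radLaw : ∫ x, x ∂radLaw = 0 := by
  have hi : ∀ a : ℝ, Integrable (fun x : ℝ => x) (Measure.dirac a) := by
    intro a
    refine memLp_one_iff_integrable.mp (MemLp.of_bound aestronglyMeasurable_id |a| ?_)
    have hae : ∀ᵐ x ∂Measure.dirac a, x = a := by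
      rw [ae_dirac_eq]; exact Filter.eventually_pure.mpr rfl
    filter_upwards [hae] with x hx
    rw [hx]; exact le_refl _
  rw [radLaw, integral_add_measure ((hi 1).smul_measure (by norm_num))
    ((hi (-1)).smul_measure (by norm_num)), integral_smul_measure, integral_smul_measure,
    integral_dirac, integral_dirac]
  simp

lemma sigma_mean {Ωσ : Type*} [MeasurableSpace Ωσ] (μσ : Measure Ωσ)
    (g : Ωσ → ℝ) (hm : Measurable g) (hl : Measure.map g μσ = radLaw) :
    ∫ ω, g ω ∂μσ = 0 := by
  have h : ∫ ω, g ω ∂μσ = ∫ x, x ∂(Measure.map g μσ) :=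
    (integral_map hm.aemeasurable aestronglyMeasurable_id).symm
  rw [h, hl, integral_id_radLaw]

lemma rad_quad {Ωσ : Type*} [MeasurableSpace Ωσ] (μσ : Measure Ωσ) [IsProbabilityMeasure μσ]
    {n : ℕ} (σ : Fin n → Ωσ → ℝ) (hσmeas : ∀ i, Measurable (σ i))
    (hσlaw : ∀ i, Measure.map (σ i) μσ = radLaw)
    (hσindep : iIndepFun σ μσ)
    (a : Fin n → ℝ) :
    ∫ ω, (∑ i, σ i ω * a i) ^ 2 ∂μσ = ∑ i, a i ^ 2 := by
  classical
  have hpm : ∀ i, ∀ᵐ ω ∂μσ, σ i ω = 1 ∨ σ i ω = -1 :=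
    fun i => sigma_ae_pm μσ (σ i) (hσmeas i) (hσlaw i)
  have habs : ∀ i, ∀ᵐ ω ∂μσ, |σ i ω| = 1 := by
    intro i; filter_upwards [hpm i] with ω h; rcases h with h | h <;> simp [h]
  have hint : ∀ i, Integrable (σ i) μσ := by
    intro i
    refine memLp_one_iff_integrable.mp (MemLp.of_bound (hσmeas i).aestronglyMeasurable 1 ?_)
    filter_upwards [habs i] with ω h
    rw [Real.norm_eq_abs, h]
  have hint2 : ∀ i k, Integrable (fun ω => σ i ω * σ k ω) μσ := by
    intro i k
    refine memLp_one_iff_integrable.mp (MemLp.of_bound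
      ((hσmeas i).mul (hσmeas k)).aestronglyMeasurable 1 ?_)
    filter_upwards [habs i, habs k] with ω h1 h2
    rw [Real.norm_eq_abs, abs_mul, h1, h2]; norm_num
  have hmean : ∀ i, ∫ ω, σ i ω ∂μσ = 0 :=
    fun i => sigma_mean μσ (σ i) (hσmeas i) (hσlaw i)
  have hcov : ∀ i k, ∫ ω, σ i ω * σ k ω ∂μσ = if i = k then 1 else 0 := by
    intro i k
    by_cases hik : i = k
    · subst hik; rw [if_pos rfl]
      have he : (fun ω => σ i ω * σ i ω) =ᵐ[μσ] fun _ => (1:ℝ) := by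
        filter_upwards [hpm i] with ω h; rcases h with h | h <;> simp [h]
      rw [integral_congr_ae he, integral_const]; simp
    · rw [if_neg hik]
      have hind : IndepFun (σ i) (σ k) μσ := hσindep.indepFun hik
      have h2 : ∫ (ω : Ωσ), σ i ω * σ k ω ∂μσ = (∫ ω, σ i ω ∂μσ) * ∫ ω, σ k ω ∂μσ :=
        hind.integral_mul_eq_mul_integral (hint i).aestronglyMeasurable (hint k).aestronglyMeasurable
      rw [h2, hmean i, hmean k, mul_zero]
  calc ∫ ω, (∑ i, σ i ω * a i) ^ 2 ∂μσ
      = ∫ ω, ∑ i, ∑ k, (a i * a k) * (σ i ω * σ k ω) ∂μσ := by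
        refine integral_congr_ae (ae_of_all _ fun ω => ?_)
        show (∑ i, σ i ω * a i) ^ 2 = ∑ i, ∑ k, (a i * a k) * (σ i ω * σ k ω)
        rw [sq, Finset.sum_mul_sum]
        exact Finset.sum_congr rfl fun i _ => Finset.sum_congr rfl fun k _ => by ring
    _ = ∑ i, ∑ k, (a i * a k) * ∫ ω, σ i ω * σ k ω ∂μσ := by
        rw [integral_finset_sum _ (fun i _ =>
          integrable_finset_sum _ (fun k _ => (hint2 i k).const_mul _))]
        refine Finset.sum_congr rfl fun i _ => ?_
        rw [integral_finset_sum _ (fun k _ => (hint2 i k).const_mul _)]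
        exact Finset.sum_congr rfl fun k _ => integral_const_mul _ _
    _ = ∑ i, a i ^ 2 := by
        refine Finset.sum_congr rfl fun i _ => ?_
        rw [Finset.sum_eq_single i]
        · rw [hcov i i, if_pos rfl, mul_one, sq]
        · intro k _ hk
          rw [hcov i k, if_neg (Ne.symm hk), mul_zero]
        · intro h; exact absurd (Finset.mem_univ i) h


theorem statement19 {𝒳 H Ωσ : Type*} [NormedAddCommGroup H] [InnerProductSpace ℝ H]
    [MeasurableSpace Ωσ] (μσ : Measure Ωσ) [IsProbabilityMeasure μσ]
    {n : ℕ} (hn : 0 < n)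
    (Xv : Fin n → 𝒳) (K : 𝒳 → H)
    (σ : Fin n → Ωσ → ℝ) (hσmeas : ∀ i, Measurable (σ i))
    (hσlaw : ∀ i, Measure.map (σ i) μσ = radLaw)
    (hσindep : iIndepFun σ μσ)
    (hHerm : (gramMat Xv K).IsHermitian)
    (lam : Fin n → ℝ) (hsorted : ∀ i j : Fin n, i ≤ j → lam j ≤ lam i)
    (heig : ∃ e : Equiv.Perm (Fin n), lam = hHerm.eigenvalues ∘ e)
    (r : ℝ) (hr : 0 < r) :
    (∫ ωσ, ⨆ f : {f : H // ‖f‖ ≤ 1 ∧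
          (∑ i, (inner ℝ f (K (Xv i)) : ℝ) ^ 2) / n ≤ r},
        (∑ i, σ i ωσ * (inner ℝ f.1 (K (Xv i)) : ℝ)) / n ∂μσ)
      ≤ Real.sqrt (2 / n * ∑ i, min r (lam i)) := by
  classical
  obtain ⟨e, he⟩ := heig
  have hnR : (0:ℝ) < n := by exact_mod_cast hn
  set b := hHerm.eigenvectorBasis with hb
  set lam' := hHerm.eigenvalues with hlam'
  have hpsd := gram_psd Xv K
  have hlam0 : ∀ j, 0 ≤ lam' j := fun j => hpsd.eigenvalues_nonneg j
  set m : Fin n → ℝ := fun j => min r (lam' j) with hm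
  have hm0 : ∀ j, 0 ≤ m j := fun j => le_min hr.le (hlam0 j)
  set st : Fin n → Ωσ → ℝ := fun j ω => ∑ i, σ i ω * b j i with hst
  set B : Ωσ → ℝ := fun ω => Real.sqrt (2 / n * ∑ j, m j * st j ω ^ 2) with hB
  have harg : ∀ ω, 0 ≤ 2 / (n:ℝ) * ∑ j, m j * st j ω ^ 2 := fun ω =>
    mul_nonneg (by positivity) (Finset.sum_nonneg fun j _ => mul_nonneg (hm0 j) (sq_nonneg _))
  have hcore : ∀ (ω : Ωσ) (f : {f : H // ‖f‖ ≤ 1 ∧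
      (∑ i, (inner ℝ f (K (Xv i)) : ℝ) ^ 2) / n ≤ r}),
      (∑ i, σ i ω * (inner ℝ f.1 (K (Xv i)) : ℝ)) / n ≤ B ω := fun ω f =>
    core_bound hn Xv K hHerm r hr (fun i => σ i ω) f.1 f.2.1 f.2.2
  have hmemzero : ‖(0:H)‖ ≤ 1 ∧ (∑ i, (inner ℝ (0:H) (K (Xv i)) : ℝ) ^ 2) / n ≤ r := by
    constructor
    · simp
    · simp only [inner_zero_left]
      simp
      positivity
  haveI hne : Nonempty {f : H // ‖f‖ ≤ 1 ∧
      (∑ i, (inner ℝ f (K (Xv i)) : ℝ) ^ 2) / n ≤ r} := ⟨⟨0, hmemzero⟩⟩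
  have hBdd : ∀ ω : Ωσ, BddAbove (Set.range fun f : {f : H // ‖f‖ ≤ 1 ∧
      (∑ i, (inner ℝ f (K (Xv i)) : ℝ) ^ 2) / n ≤ r} =>
      (∑ i, σ i ω * (inner ℝ f.1 (K (Xv i)) : ℝ)) / n) := by
    intro ω
    refine ⟨B ω, ?_⟩
    rintro x ⟨f, rfl⟩
    exact hcore ω f
  have hsup_le : ∀ ω : Ωσ, (⨆ f : {f : H // ‖f‖ ≤ 1 ∧
      (∑ i, (inner ℝ f (K (Xv i)) : ℝ) ^ 2) / n ≤ r},
      (∑ i, σ i ω * (inner ℝ f.1 (K (Xv i)) : ℝ)) / n) ≤ B ω := fun ω => ciSup_le (hcore ω)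
  have hsup_nonneg : ∀ ω : Ωσ, 0 ≤ (⨆ f : {f : H // ‖f‖ ≤ 1 ∧
      (∑ i, (inner ℝ f (K (Xv i)) : ℝ) ^ 2) / n ≤ r},
      (∑ i, σ i ω * (inner ℝ f.1 (K (Xv i)) : ℝ)) / n) := by
    intro ω
    have h0 : (∑ i, σ i ω * (inner ℝ ((⟨0, hmemzero⟩ : {f : H // ‖f‖ ≤ 1 ∧
        (∑ i, (inner ℝ f (K (Xv i)) : ℝ) ^ 2) / n ≤ r}) : {f : H // ‖f‖ ≤ 1 ∧
        (∑ i, (inner ℝ f (K (Xv i)) : ℝ) ^ 2) / n ≤ r}).1 (K (Xv i)) : ℝ)) / n = 0 := by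
      simp
    rw [← h0]
    exact le_ciSup (hBdd ω) _
  have hstmeas : ∀ j, Measurable (fun ω => st j ω) := by
    intro j
    apply Finset.measurable_sum
    intro i _
    exact (hσmeas i).mul_const _
  have hBmeas : Measurable B := by
    apply (Real.continuous_sqrt.measurable).comp
    apply Measurable.const_mul
    apply Finset.measurable_sum
    intro j _
    exact ((hstmeas j).pow_const 2).const_mul _
  have hpm : ∀ᵐ ω ∂μσ, ∀ i, σ i ω = 1 ∨ σ i ω = -1 :=
    ae_all_iff.mpr fun i => sigma_ae_pm μσ (σ i) (hσmeas i) (hσlaw i)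
  set C : ℝ := Real.sqrt (2 / n * ∑ j, m j * (∑ i, |b j i|) ^ 2) with hC
  have hBbd : ∀ᵐ ω ∂μσ, ‖B ω‖ ≤ C := by
    filter_upwards [hpm] with ω hω
    rw [Real.norm_eq_abs, abs_of_nonneg (Real.sqrt_nonneg _)]
    apply Real.sqrt_le_sqrt
    apply mul_le_mul_of_nonneg_left ?_ (by positivity : (0:ℝ) ≤ 2 / n)
    apply Finset.sum_le_sum
    intro j _
    apply mul_le_mul_of_nonneg_left ?_ (hm0 j)
    have h1 : |st j ω| ≤ ∑ i, |b j i| := by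
      calc |st j ω| ≤ ∑ i, |σ i ω * b j i| := Finset.abs_sum_le_sum_abs _ _
        _ = ∑ i, |b j i| := Finset.sum_congr rfl fun i _ => by
            rw [abs_mul]
            rcases hω i with h | h <;> rw [h] <;> simp
    calc st j ω ^ 2 = |st j ω| ^ 2 := (sq_abs _).symm
      _ ≤ (∑ i, |b j i|) ^ 2 := pow_le_pow_left₀ (abs_nonneg _) h1 2
  have hBmem : MemLp B 2 μσ := MemLp.of_bound hBmeas.aestronglyMeasurable C hBbd
  have hBint : Integrable B μσ := hBmem.integrable (by norm_num)
  have hstep1 : (∫ ω, ⨆ f : {f : H // ‖f‖ ≤ 1 ∧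
      (∑ i, (inner ℝ f (K (Xv i)) : ℝ) ^ 2) / n ≤ r},
      (∑ i, σ i ω * (inner ℝ f.1 (K (Xv i)) : ℝ)) / n ∂μσ) ≤ ∫ ω, B ω ∂μσ :=
    integral_mono_of_nonneg (ae_of_all _ hsup_nonneg) hBint (ae_of_all _ hsup_le)
  have hip : ∀ x y : EuclideanSpace ℝ (Fin n), (inner ℝ x y : ℝ) = ∑ i, x i * y i := by
    intro x y; rw [PiLp.inner_apply]; simp [RCLike.inner_apply, mul_comm]
  have hbnorm : ∀ j, ∑ i, b j i ^ 2 = 1 := by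
    intro j
    have h1 := (orthonormal_iff_ite.mp b.orthonormal) j j
    rw [if_pos rfl, hip] at h1
    rw [← h1]
    exact Finset.sum_congr rfl fun i _ => pow_two (b j i)
  have hintj : ∀ j, Integrable (fun ω => m j * st j ω ^ 2) μσ := by
    intro j
    refine memLp_one_iff_integrable.mp (MemLp.of_bound
      (((hstmeas j).pow_const 2).const_mul _).aestronglyMeasurable
      (m j * (∑ i, |b j i|) ^ 2) ?_)
    filter_upwards [hpm] with ω hω
    rw [Real.norm_eq_abs, abs_mul, abs_of_nonneg (hm0 j), abs_of_nonneg (sq_nonneg _)]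
    apply mul_le_mul_of_nonneg_left ?_ (hm0 j)
    have h1 : |st j ω| ≤ ∑ i, |b j i| := by
      calc |st j ω| ≤ ∑ i, |σ i ω * b j i| := Finset.abs_sum_le_sum_abs _ _
        _ = ∑ i, |b j i| := Finset.sum_congr rfl fun i _ => by
            rw [abs_mul]
            rcases hω i with h | h <;> rw [h] <;> simp
    calc st j ω ^ 2 = |st j ω| ^ 2 := (sq_abs _).symm
      _ ≤ (∑ i, |b j i|) ^ 2 := pow_le_pow_left₀ (abs_nonneg _) h1 2
  have hB2 : ∫ ω, B ω ^ 2 ∂μσ = 2 / n * ∑ j, m j := by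
    have hsq : ∀ ω, B ω ^ 2 = 2 / n * ∑ j, m j * st j ω ^ 2 := fun ω =>
      Real.sq_sqrt (harg ω)
    calc ∫ ω, B ω ^ 2 ∂μσ = ∫ ω, 2 / (n:ℝ) * ∑ j, m j * st j ω ^ 2 ∂μσ :=
          integral_congr_ae (ae_of_all _ fun ω => hsq ω)
      _ = 2 / (n:ℝ) * ∫ ω, ∑ j, m j * st j ω ^ 2 ∂μσ := integral_const_mul _ _
      _ = 2 / (n:ℝ) * ∑ j, m j * ∫ ω, st j ω ^ 2 ∂μσ := by
          rw [integral_finset_sum _ (fun j _ => hintj j)]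
          congr 1
          exact Finset.sum_congr rfl fun j _ => integral_const_mul _ _
      _ = 2 / (n:ℝ) * ∑ j, m j := by
          congr 1
          refine Finset.sum_congr rfl fun j _ => ?_
          have hq := rad_quad μσ σ hσmeas hσlaw hσindep (fun i => b j i)
          rw [hq, hbnorm j, mul_one]
  have hI0 : 0 ≤ ∫ ω, B ω ∂μσ := integral_nonneg fun ω => Real.sqrt_nonneg _
  have hvar := variance_nonneg B μσ
  rw [variance_eq_sub hBmem] at hvar
  have hEB2 : ∫ ω, (B ^ 2) ω ∂μσ = ∫ ω, B ω ^ 2 ∂μσ := rfl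
  rw [hEB2, hB2] at hvar
  have hfinal : (∫ ω, B ω ∂μσ) ^ 2 ≤ 2 / (n:ℝ) * ∑ j, m j := by linarith
  have hlam_sum : ∑ i, min r (lam i) = ∑ j, m j := by
    rw [he]
    exact Equiv.sum_comp e m
  calc (∫ ω, ⨆ f : {f : H // ‖f‖ ≤ 1 ∧
      (∑ i, (inner ℝ f (K (Xv i)) : ℝ) ^ 2) / n ≤ r},
      (∑ i, σ i ω * (inner ℝ f.1 (K (Xv i)) : ℝ)) / n ∂μσ)
      ≤ ∫ ω, B ω ∂μσ := hstep1
    _ ≤ Real.sqrt (2 / (n:ℝ) * ∑ j, m j) := Real.le_sqrt_of_sq_le hfinal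
    _ = Real.sqrt (2 / n * ∑ i, min r (lam i)) := by rw [hlam_sum]
end
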